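/- arXiv:2202.03357 — 5 statements merged into one kernel-verified Lean document; each statement's English description precedes it below -/
import Mathlib

section
/- Let (X, μ) be a probability space and f : X → ℝ a measurable function with f ≥ 0 almost everywhere, ∫ f dμ = 1, and f·log f integrable. Then ∫ f log f dμ = 0 if and only if f = 1 μ-almost everywhere. -/
/-!
The function `klFun x = x log x + 1 - x` is nonnegative on `[0, ∞)` and vanishes there only at
`x = 1`. Since `∫ f = 1 = μ X`, the integrals of `f log f` and of `klFun ∘ f` agree, and a
nonnegative function has zero integral iff it vanishes almost everywhere.
-/

open MeasureTheory InformationTheory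

section

variable {X : Type*} [MeasurableSpace X] {μ : Measure X} {f : X → ℝ}

lemma MeasureTheory.Integrable.klFun_comp [IsFiniteMeasure μ] (hf : Integrable f μ)
    (hint : Integrable (fun x => f x * Real.log (f x)) μ) :
    Integrable (fun x => klFun (f x)) μ :=
  (hint.add (integrable_const 1)).sub hf

lemma integral_klFun_comp [IsFiniteMeasure μ] (hf : Integrable f μ)
    (hint : Integrable (fun x => f x * Real.log (f x)) μ) :
    ∫ x, klFun (f x) ∂μ = ∫ x, f x * Real.log (f x) ∂μ + μ.real Set.univ - ∫ x, f x ∂μ := by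
  simp only [klFun_apply]
  rw [integral_sub (f := fun x => f x * Real.log (f x) + 1) (hint.add (integrable_const 1)) hf,
    integral_add hint (integrable_const 1), integral_const, smul_eq_mul, mul_one]

lemma klFun_comp_ae_eq_zero_iff (hf0 : 0 ≤ᵐ[μ] f) :
    (fun x => klFun (f x)) =ᵐ[μ] 0 ↔ f =ᵐ[μ] fun _ => 1 := by
  constructor <;> intro h <;> filter_upwards [h, hf0] with x hx hx0
  · exact (klFun_eq_zero_iff hx0).mp hx
  · simp [hx, klFun_one]

end

theorem integral_mul_log_eq_zero_iff_general {X : Type*} [MeasurableSpace X]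
    (μ : Measure X) [IsProbabilityMeasure μ]
    (f : X → ℝ) (hf0 : 0 ≤ᵐ[μ] f)
    (hf1 : ∫ x, f x ∂μ = 1)
    (hint : Integrable (fun x => f x * Real.log (f x)) μ) :
    ∫ x, f x * Real.log (f x) ∂μ = 0 ↔ f =ᵐ[μ] (fun _ => 1) := by
  have hf : Integrable f μ := Integrable.of_integral_ne_zero (by simp [hf1])
  have hkl : ∫ x, klFun (f x) ∂μ = ∫ x, f x * Real.log (f x) ∂μ := by
    rw [integral_klFun_comp hf hint, hf1, probReal_univ, add_sub_cancel_right]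
  have hkl_nonneg : 0 ≤ᵐ[μ] fun x => klFun (f x) := hf0.mono fun x hx => klFun_nonneg hx
  rw [← hkl, integral_eq_zero_iff_of_nonneg_ae hkl_nonneg (hf.klFun_comp hint),
    klFun_comp_ae_eq_zero_iff hf0]

/-- If `f ≥ 0` a.e. with `∫ f dμ = 1` on a probability space, then
`∫ f log f dμ = 0` iff `f = 1` a.e. -/
theorem integral_mul_log_eq_zero_iff {X : Type*} [MeasurableSpace X]
    (μ : Measure X) [IsProbabilityMeasure μ]
    (f : X → ℝ) (hf : Measurable f) (hf0 : 0 ≤ᵐ[μ] f)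
    (hf1 : ∫ x, f x ∂μ = 1)
    (hint : Integrable (fun x => f x * Real.log (f x)) μ) :
    ∫ x, f x * Real.log (f x) ∂μ = 0 ↔ f =ᵐ[μ] (fun _ => 1) :=
  integral_mul_log_eq_zero_iff_general μ f hf0 hf1 hint
end

section
/- Let μ be a probability measure and ν a finite measure on a measurable space X, and let λ > 0 be a real number such that λ • μ ≤ ν (that is, λ·μ(A) ≤ ν(A) for every measurable set A). Then klDiv μ ν ≤ -log λ (as extended real numbers). This is the commutative form of the bound S(φ‖φ∘ε) ≤ log[A:B]_ε obtained from the Pimsner–Popa inequality. -/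
/-! The inequality `l • μ ≤ ν` forces `μ ≪ ν` with `dμ/dν ≤ 1/l`, so `llr μ ν ≤ -log l` μ-a.e.
Integrability of `llr μ ν` with respect to `μ` is integrability of `t log t` at `t = dμ/dν`
with respect to the finite measure `ν`, and `t log t` is bounded on `[0, 1/l]`. -/

open MeasureTheory

open scoped Classical in
/-- The Kullback–Leibler divergence of the measure `μ` with respect to the measure `ν`,
as in Mathlib's `InformationTheory.klDiv`. -/
noncomputable def klDiv {X : Type*} [MeasurableSpace X] (μ ν : Measure X) : EReal :=
  if μ ≪ ν ∧ Integrable (llr μ ν) μ then ((∫ x, llr μ ν x ∂μ : ℝ) : EReal) else ⊤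

namespace MeasureTheory

variable {X : Type*} [MeasurableSpace X] {μ ν : Measure X}

lemma Measure.absolutelyContinuous_of_smul_le {c : ENNReal} (hc : c ≠ 0) (h : c • μ ≤ ν) :
    μ ≪ ν :=
  (Measure.absolutelyContinuous_smul hc).trans (Measure.absolutelyContinuous_of_le h)

lemma Measure.rnDeriv_le_inv_of_smul_le [IsFiniteMeasure μ] [SigmaFinite ν] {c : ENNReal}
    (hc : c ≠ ⊤) (h : c • μ ≤ ν) : μ.rnDeriv ν ≤ᵐ[ν] fun _ ↦ c⁻¹ := by
  filter_upwards [Measure.rnDeriv_le_one_of_le h, μ.rnDeriv_smul_left_of_ne_top ν hc]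
    with x hle heq
  rw [heq] at hle
  exact ENNReal.le_inv_iff_mul_le.mpr (by simpa [mul_comm] using hle)

lemma llr_le_log_of_rnDeriv_le [μ.HaveLebesgueDecomposition ν] (hμν : μ ≪ ν) {c : ENNReal}
    (hc : c ≠ ⊤) (hle : μ.rnDeriv ν ≤ᵐ[ν] fun _ ↦ c) :
    ∀ᵐ x ∂μ, llr μ ν x ≤ Real.log c.toReal := by
  filter_upwards [Measure.rnDeriv_pos hμν, hμν.ae_le hle] with x hpos hle
  exact Real.log_le_log (ENNReal.toReal_pos hpos.ne' (hle.trans_lt hc.lt_top).ne)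
    (ENNReal.toReal_mono hc hle)

lemma integrable_llr_of_rnDeriv_le [SigmaFinite μ] [IsFiniteMeasure ν] (hμν : μ ≪ ν)
    {c : ENNReal} (hc : c ≠ ⊤) (hle : μ.rnDeriv ν ≤ᵐ[ν] fun _ ↦ c) :
    Integrable (llr μ ν) μ := by
  rw [← integrable_rnDeriv_mul_log_iff hμν]
  obtain ⟨B, hB⟩ : ∃ B, ∀ t ∈ Set.Icc 0 c.toReal, ‖t * Real.log t‖ ≤ B :=
    isCompact_Icc.exists_bound_of_continuousOn Real.continuous_mul_log.continuousOn
  refine Integrable.of_bound (by fun_prop) B ?_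
  filter_upwards [hle] with x hx
  exact hB _ ⟨ENNReal.toReal_nonneg, ENNReal.toReal_mono hc hx⟩

end MeasureTheory

/-- If `l • μ ≤ ν` with `l > 0`, then `klDiv μ ν ≤ -log l`: the commutative form of the
bound `S(φ‖φ∘ε) ≤ log [A:B]_ε` obtained from the Pimsner–Popa inequality. -/
theorem klDiv_le_neg_log_of_smul_le {X : Type*} [MeasurableSpace X]
    (μ ν : Measure X) [IsProbabilityMeasure μ] [IsFiniteMeasure ν]
    (l : ℝ) (hl : 0 < l) (h : ENNReal.ofReal l • μ ≤ ν) :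
    klDiv μ ν ≤ ((-Real.log l : ℝ) : EReal) := by
  have hl₀ : ENNReal.ofReal l ≠ 0 := ENNReal.ofReal_ne_zero_iff.mpr hl
  have hinv : (ENNReal.ofReal l)⁻¹ ≠ ⊤ := ENNReal.inv_ne_top.mpr hl₀
  have hμν : μ ≪ ν := Measure.absolutelyContinuous_of_smul_le hl₀ h
  have hle := Measure.rnDeriv_le_inv_of_smul_le ENNReal.ofReal_ne_top h
  have hint : Integrable (llr μ ν) μ := integrable_llr_of_rnDeriv_le hμν hinv hle
  have hllr : ∀ᵐ x ∂μ, llr μ ν x ≤ -Real.log l := by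
    simpa [ENNReal.toReal_inv, hl.le] using llr_le_log_of_rnDeriv_le hμν hinv hle
  rw [klDiv, if_pos ⟨hμν, hint⟩, EReal.coe_le_coe_iff]
  simpa using integral_mono_ae hint (integrable_const _) hllr
end

section
/- Let σ and ρ be n×n positive definite density matrices. Then Tr(σ · (log σ - log ρ)) is a real number and Tr(σ · (log σ - log ρ)) ≥ 0, with equality if and only if σ = ρ (nonnegativity of the relative entropy S(φ‖ψ) and its vanishing exactly for equal states, in the matrix case). -/
open scoped ComplexOrder

/-!
Diagonalize `σ = U diag(p) U*` and `ρ = V diag(q) V*`. The squared moduli of the entries of the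
unitary `W = U* V` form a doubly stochastic matrix, so, since `Tr σ = Tr ρ`,
`Tr σ (log σ - log ρ) = ∑ i j, |W i j|² (p i (log p i - log q j) + q j - p i)`.
Each bracket equals `q j · klFun (p i / q j) ≥ 0`, with equality only for `p i = q j`. So the sum
vanishes iff `p i = q j` whenever `W i j ≠ 0`, i.e. iff `diag(p) W = W diag(q)`, i.e. iff `σ = ρ`.
-/

namespace Real

open InformationTheory

theorem mul_klFun_div {p q : ℝ} (hp : 0 < p) (hq : 0 < q) :
    q * klFun (p / q) = p * (log p - log q) + q - p := by
  rw [klFun_apply, log_div hp.ne' hq.ne']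
  field_simp

theorem mul_log_sub_log_add_sub_nonneg {p q : ℝ} (hp : 0 < p) (hq : 0 < q) :
    0 ≤ p * (log p - log q) + q - p := by
  rw [← mul_klFun_div hp hq]
  exact mul_nonneg hq.le (klFun_nonneg (div_pos hp hq).le)

theorem mul_log_sub_log_add_sub_eq_zero_iff {p q : ℝ} (hp : 0 < p) (hq : 0 < q) :
    p * (log p - log q) + q - p = 0 ↔ p = q := by
  rw [← mul_klFun_div hp hq, mul_eq_zero, klFun_eq_zero_iff (div_pos hp hq).le,
    div_eq_one_iff_eq hq.ne']
  simp [hq.ne']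

end Real

namespace Matrix

open Finset Real Unitary

variable {m 𝕜 : Type*} [Fintype m] [DecidableEq m] [RCLike 𝕜]

section DoublyStochastic

variable {M : Matrix m m ℝ} {p q : m → ℝ}

theorem sum_mul_log_sub_sum_mul_log_eq_of_mem_doublyStochastic
    (hM : M ∈ doublyStochastic ℝ m) (hpq : ∑ i, p i = ∑ j, q j) :
    ∑ i, p i * log (p i) - ∑ i, ∑ j, M i j * (p i * log (q j))
      = ∑ i, ∑ j, M i j * (p i * (log (p i) - log (q j)) + q j - p i) := by
  have hrow (x : m → ℝ) : ∑ i, ∑ j, M i j * x i = ∑ i, x i := by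
    simp_rw [← sum_mul, sum_row_of_mem_doublyStochastic hM, one_mul]
  have hcol (y : m → ℝ) : ∑ i, ∑ j, M i j * y j = ∑ j, y j := by
    rw [sum_comm]
    simp_rw [← sum_mul, sum_col_of_mem_doublyStochastic hM, one_mul]
  have hsplit (i j : m) : M i j * (p i * (log (p i) - log (q j)) + q j - p i)
      = M i j * (p i * log (p i)) - M i j * (p i * log (q j)) + M i j * q j - M i j * p i := by
    ring
  simp only [hsplit, sum_add_distrib, sum_sub_distrib, hrow, hcol, hpq]
  ring

theorem mul_log_sub_log_add_sub_nonneg_of_mem_doublyStochastic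
    (hM : M ∈ doublyStochastic ℝ m) (hp : ∀ i, 0 < p i) (hq : ∀ j, 0 < q j) (i j : m) :
    0 ≤ M i j * (p i * (log (p i) - log (q j)) + q j - p i) :=
  mul_nonneg (nonneg_of_mem_doublyStochastic hM) (mul_log_sub_log_add_sub_nonneg (hp i) (hq j))

theorem sum_mul_log_sub_log_add_sub_nonneg_of_mem_doublyStochastic
    (hM : M ∈ doublyStochastic ℝ m) (hp : ∀ i, 0 < p i) (hq : ∀ j, 0 < q j) :
    0 ≤ ∑ i, ∑ j, M i j * (p i * (log (p i) - log (q j)) + q j - p i) :=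
  sum_nonneg fun i _ => sum_nonneg fun j _ =>
    mul_log_sub_log_add_sub_nonneg_of_mem_doublyStochastic hM hp hq i j

theorem sum_mul_log_sub_log_add_sub_eq_zero_iff_of_mem_doublyStochastic
    (hM : M ∈ doublyStochastic ℝ m) (hp : ∀ i, 0 < p i) (hq : ∀ j, 0 < q j) :
    ∑ i, ∑ j, M i j * (p i * (log (p i) - log (q j)) + q j - p i) = 0
      ↔ ∀ i j, M i j ≠ 0 → p i = q j := by
  have hterm := mul_log_sub_log_add_sub_nonneg_of_mem_doublyStochastic hM hp hq
  simp only [sum_eq_zero_iff_of_nonneg fun i _ => sum_nonneg fun j _ => hterm i j,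
    sum_eq_zero_iff_of_nonneg fun j _ => hterm _ j, mem_univ, true_implies, mul_eq_zero,
    mul_log_sub_log_add_sub_eq_zero_iff (hp _) (hq _)]
  exact forall₂_congr fun i j => or_iff_not_imp_left

end DoublyStochastic

theorem of_norm_sq_mem_doublyStochastic (U : unitaryGroup m 𝕜) :
    of (fun i j => ‖(U : Matrix m m 𝕜) i j‖ ^ 2) ∈ doublyStochastic ℝ m := by
  have hrow (V : unitaryGroup m 𝕜) (i : m) : ∑ j, ‖(V : Matrix m m 𝕜) i j‖ ^ 2 = 1 := by
    have h : ((V : Matrix m m 𝕜) * star (V : Matrix m m 𝕜)) i i = 1 := by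
      rw [Unitary.mul_star_self_of_mem V.2, one_apply_eq]
    simp only [mul_apply, star_apply, RCLike.star_def, RCLike.mul_conj] at h
    exact_mod_cast h
  refine mem_doublyStochastic_iff_sum.2 ⟨fun _ _ => sq_nonneg _, hrow U, fun j => ?_⟩
  simpa [star_apply] using hrow (star U) j

theorem trace_conjStarAlgAut (U : unitaryGroup m 𝕜) (x : Matrix m m 𝕜) :
    (conjStarAlgAut 𝕜 _ U x).trace = x.trace := by
  rw [conjStarAlgAut_apply, trace_mul_cycle, coe_star_mul_self, one_mul]

theorem trace_diagonal_mul_conjStarAlgAut_diagonal (W : unitaryGroup m 𝕜) (d e : m → 𝕜) :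
    (diagonal d * conjStarAlgAut 𝕜 _ W (diagonal e)).trace
      = ∑ i, ∑ j, (‖(W : Matrix m m 𝕜) i j‖ ^ 2 : ℝ) * (d i * e j) := by
  refine sum_congr rfl fun i _ => ?_
  rw [diag_apply, diagonal_mul, conjStarAlgAut_apply, mul_apply, mul_sum]
  refine sum_congr rfl fun j _ => ?_
  rw [mul_diagonal, star_apply, RCLike.star_def, RCLike.ofReal_pow, ← RCLike.mul_conj]
  ring

theorem trace_conjStarAlgAut_diagonal_mul_conjStarAlgAut_diagonal (U V : unitaryGroup m 𝕜)
    (d e : m → 𝕜) :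
    (conjStarAlgAut 𝕜 _ U (diagonal d) * conjStarAlgAut 𝕜 _ V (diagonal e)).trace
      = ∑ i, ∑ j, (‖((U⁻¹ * V : unitaryGroup m 𝕜) : Matrix m m 𝕜) i j‖ ^ 2 : ℝ) * (d i * e j) := by
  symm
  rw [← trace_diagonal_mul_conjStarAlgAut_diagonal, ← trace_conjStarAlgAut U, map_mul,
    ← conjStarAlgAut_mul_apply, mul_inv_cancel_left]

theorem conjStarAlgAut_diagonal_eq_of_forall_ne_zero {U V : unitaryGroup m 𝕜} {d e : m → 𝕜}
    (h : ∀ i j, ((U⁻¹ * V : unitaryGroup m 𝕜) : Matrix m m 𝕜) i j ≠ 0 → d i = e j) :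
    conjStarAlgAut 𝕜 _ U (diagonal d) = conjStarAlgAut 𝕜 _ V (diagonal e) := by
  set W := U⁻¹ * V
  have hcomm : diagonal d * (W : Matrix m m 𝕜) = W * diagonal e := by
    ext i j
    rw [diagonal_mul, mul_diagonal]
    by_cases hW : (W : Matrix m m 𝕜) i j = 0
    · simp [hW]
    · rw [h i j hW, mul_comm]
  have hd : diagonal d = conjStarAlgAut 𝕜 _ W (diagonal e) := by
    rw [conjStarAlgAut_apply, ← hcomm, mul_assoc, Unitary.mul_star_self_of_mem W.2, mul_one]
  rw [hd, ← conjStarAlgAut_mul_apply, mul_inv_cancel_left]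

namespace IsHermitian

variable {A B : Matrix m m 𝕜}

theorem cfc_id (hA : A.IsHermitian) : hA.cfc id = A :=
  hA.spectral_theorem.symm

theorem trace_cfc_mul_cfc_self (hA : A.IsHermitian) (f g : ℝ → ℝ) :
    (hA.cfc f * hA.cfc g).trace
      = ((∑ i, f (hA.eigenvalues i) * g (hA.eigenvalues i) : ℝ) : 𝕜) := by
  rw [IsHermitian.cfc, IsHermitian.cfc, ← map_mul, trace_conjStarAlgAut, diagonal_mul_diagonal,
    trace_diagonal]
  simp

theorem trace_cfc_mul_cfc (hA : A.IsHermitian) (hB : B.IsHermitian) (f g : ℝ → ℝ) :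
    (hA.cfc f * hB.cfc g).trace
      = ((∑ i, ∑ j, ‖((hA.eigenvectorUnitary⁻¹ * hB.eigenvectorUnitary : unitaryGroup m 𝕜) :
          Matrix m m 𝕜) i j‖ ^ 2 * (f (hA.eigenvalues i) * g (hB.eigenvalues j)) : ℝ) : 𝕜) := by
  rw [IsHermitian.cfc, IsHermitian.cfc, trace_conjStarAlgAut_diagonal_mul_conjStarAlgAut_diagonal]
  simp

theorem trace_mul_cfc_sub_cfc (hA : A.IsHermitian) (hB : B.IsHermitian) (f : ℝ → ℝ) :
    (A * (hA.cfc f - hB.cfc f)).trace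
      = ((∑ i, hA.eigenvalues i * f (hA.eigenvalues i)
          - ∑ i, ∑ j, ‖((hA.eigenvectorUnitary⁻¹ * hB.eigenvectorUnitary : unitaryGroup m 𝕜) :
            Matrix m m 𝕜) i j‖ ^ 2 * (hA.eigenvalues i * f (hB.eigenvalues j)) : ℝ) : 𝕜) := by
  have hself := hA.trace_cfc_mul_cfc_self id f
  have hcross := hA.trace_cfc_mul_cfc hB id f
  rw [hA.cfc_id] at hself hcross
  rw [mul_sub, trace_sub, hself, hcross, RCLike.ofReal_sub]
  rfl

end IsHermitian

end Matrix

open Matrix Real in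
/-- For positive definite density matrices `σ, ρ`, the relative entropy
`Tr(σ (log σ - log ρ))` is a real number, is nonnegative, and vanishes iff `σ = ρ`.
Here `log` is applied through the Hermitian functional calculus. -/
theorem matrix_relEntropy_nonneg {n : ℕ}
    (σ ρ : Matrix (Fin n) (Fin n) ℂ) (hσ : σ.PosDef) (hρ : ρ.PosDef)
    (hσt : σ.trace = 1) (hρt : ρ.trace = 1) :
    ∃ r : ℝ, (σ * (hσ.1.cfc Real.log - hρ.1.cfc Real.log)).trace = (r : ℂ)
      ∧ 0 ≤ r ∧ (r = 0 ↔ σ = ρ) := by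
  set p := hσ.1.eigenvalues
  set q := hρ.1.eigenvalues
  set W := hσ.1.eigenvectorUnitary⁻¹ * hρ.1.eigenvectorUnitary
  set M : Matrix (Fin n) (Fin n) ℝ := of fun i j => ‖(W : Matrix (Fin n) (Fin n) ℂ) i j‖ ^ 2
  have hM : M ∈ doublyStochastic ℝ (Fin n) := of_norm_sq_mem_doublyStochastic W
  have hpq : ∑ i, p i = ∑ j, q j := by
    have h := hσt.trans hρt.symm
    rw [hσ.1.trace_eq_sum_eigenvalues, hρ.1.trace_eq_sum_eigenvalues] at h
    exact_mod_cast h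
  have htrace : (σ * (hσ.1.cfc log - hρ.1.cfc log)).trace
      = ((∑ i, ∑ j, M i j * (p i * (log (p i) - log (q j)) + q j - p i) : ℝ) : ℂ) := by
    rw [hσ.1.trace_mul_cfc_sub_cfc hρ.1,
      ← sum_mul_log_sub_sum_mul_log_eq_of_mem_doublyStochastic hM hpq]
    rfl
  refine ⟨_, htrace, sum_mul_log_sub_log_add_sub_nonneg_of_mem_doublyStochastic hM
    hσ.eigenvalues_pos hρ.eigenvalues_pos, fun h => ?_, ?_⟩
  · rw [sum_mul_log_sub_log_add_sub_eq_zero_iff_of_mem_doublyStochastic hM hσ.eigenvalues_pos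
      hρ.eigenvalues_pos] at h
    rw [hσ.1.spectral_theorem, hρ.1.spectral_theorem]
    refine conjStarAlgAut_diagonal_eq_of_forall_ne_zero fun i j hW => ?_
    simp only [Function.comp_apply, RCLike.ofReal_inj]
    exact h i j (pow_ne_zero 2 (norm_ne_zero_iff.2 hW))
  · rintro rfl
    rw [sub_self, mul_zero, trace_zero] at htrace
    exact_mod_cast htrace.symm
end

section
/- Let m, n ≥ 1 and let σ be a density matrix indexed by Fin m × Fin n, with partial traces σ₁ and σ₂. Then H(σ) ≤ H(σ₁) + H(σ₂) (subadditivity of von Neumann entropy; equivalently, S_τ(φ|_A) + S_vN(φ|_{M_n}) - S_τ(φ) ≥ log n for a state φ on A ⊗ M_n with A = M_m). -/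
/-!
Diagonalize the partial traces, `σ₁ = V diag(a) Vᴴ` and `σ₂ = W diag(b) Wᴴ`, and let `d` be the
diagonal of `(V ⊗ W)ᴴ σ (V ⊗ W)`: a probability vector on `Fin m × Fin n` whose marginals are `a`
and `b`. The diagonal of a unitary conjugate of `σ` is the image of the spectrum of `σ` under the
doubly stochastic matrix `(|M x α|²)`, so concavity of `t ↦ -t log t` gives `H(σ) ≤ H(d)`, and
`H(d) ≤ H(a) + H(b)` is the subadditivity of Shannon entropy (Gibbs' inequality `log t ≤ t - 1`).
-/

open scoped ComplexOrder

noncomputable def vNEntropy {n : Type*} [Fintype n] [DecidableEq n]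
    (σ : Matrix n n ℂ) : ℝ :=
  if h : σ.IsHermitian then -∑ i, h.eigenvalues i * Real.log (h.eigenvalues i) else 0

open Matrix Real
open scoped Kronecker

namespace Matrix

variable {R ι ι' κ κ' : Type*}

def traceRight [AddCommMonoid R] [Fintype κ] (A : Matrix (ι × κ) (ι × κ) R) : Matrix ι ι R :=
  of fun i j ↦ ∑ k, A (i, k) (j, k)

def traceLeft [AddCommMonoid R] [Fintype ι] (A : Matrix (ι × κ) (ι × κ) R) : Matrix κ κ R :=
  traceRight (A.submatrix Prod.swap Prod.swap)

theorem conjTranspose_traceRight [AddCommMonoid R] [StarAddMonoid R] [Fintype κ]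
    (A : Matrix (ι × κ) (ι × κ) R) : (traceRight A)ᴴ = traceRight Aᴴ := by
  ext; simp [traceRight, star_sum]

theorem IsHermitian.traceRight [AddCommMonoid R] [StarAddMonoid R] [Fintype κ]
    {A : Matrix (ι × κ) (ι × κ) R} (hA : A.IsHermitian) : A.traceRight.IsHermitian := by
  rw [IsHermitian, conjTranspose_traceRight, hA]

theorem IsHermitian.traceLeft [AddCommMonoid R] [StarAddMonoid R] [Fintype ι]
    {A : Matrix (ι × κ) (ι × κ) R} (hA : A.IsHermitian) : A.traceLeft.IsHermitian :=
  (hA.submatrix Prod.swap).traceRight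

theorem traceRight_conjTranspose_kronecker_mul_mul [CommSemiring R] [StarRing R] [Fintype ι]
    [Fintype κ] [Fintype κ'] [DecidableEq κ] (A : Matrix (ι × κ) (ι × κ) R) (V : Matrix ι ι' R)
    {W : Matrix κ κ' R} (hW : W * Wᴴ = 1) :
    traceRight ((V ⊗ₖ W)ᴴ * A * (V ⊗ₖ W)) = Vᴴ * traceRight A * V := by
  have hW' (b c : κ) : ∑ k, star (W b k) * W c k = if b = c then 1 else 0 := by
    simpa [mul_apply, one_apply, mul_comm, eq_comm] using congr_fun₂ hW c b
  ext i j
  simp only [traceRight, of_apply, mul_apply, conjTranspose_apply, kroneckerMap_apply,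
    Fintype.sum_prod_type, star_mul', Finset.sum_mul, Finset.mul_sum]
  conv_lhs =>
    rw [Finset.sum_comm]
    enter [2, c₁]
    rw [Finset.sum_comm]
    enter [2, c₂]
    rw [Finset.sum_comm]
    enter [2, b₁]
    rw [Finset.sum_comm]
  have hk (c₁ b₁ : ι) (c₂ b₂ : κ) :
      ∑ k, star (V b₁ i) * star (W b₂ k) * A (b₁, b₂) (c₁, c₂) * (V c₁ j * W c₂ k) =
        star (V b₁ i) * A (b₁, b₂) (c₁, c₂) * V c₁ j * if b₂ = c₂ then 1 else 0 := by
    rw [← hW', Finset.mul_sum]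
    exact Finset.sum_congr rfl fun k _ ↦ by ring
  simp only [hk, mul_ite, mul_one, mul_zero, Finset.sum_ite_eq', Finset.mem_univ, if_true]
  exact Finset.sum_congr rfl fun c₁ _ ↦ Finset.sum_comm

theorem traceLeft_conjTranspose_kronecker_mul_mul [CommSemiring R] [StarRing R] [Fintype ι]
    [Fintype ι'] [Fintype κ] [DecidableEq ι] (A : Matrix (ι × κ) (ι × κ) R) {V : Matrix ι ι' R}
    (hV : V * Vᴴ = 1) (W : Matrix κ κ' R) :
    traceLeft ((V ⊗ₖ W)ᴴ * A * (V ⊗ₖ W)) = Wᴴ * traceLeft A * W := by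
  have hswap : (V ⊗ₖ W).submatrix Prod.swap Prod.swap = W ⊗ₖ V := by
    ext; simp [mul_comm]
  rw [traceLeft, traceLeft, ← traceRight_conjTranspose_kronecker_mul_mul _ _ hV, ← hswap,
    conjTranspose_submatrix]
  simp only [← Equiv.coe_prodComm, submatrix_mul_equiv]

end Matrix

theorem negMulLog_le_neg_mul_log_add_sub {x y : ℝ} (hx : 0 ≤ x) (hy : 0 ≤ y)
    (hxy : 0 < x → 0 < y) : negMulLog x ≤ -x * log y + y - x := by
  rcases hx.eq_or_lt with rfl | hx
  · simpa using hy
  have hy := hxy hx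
  have gibbs := mul_le_mul_of_nonneg_left (log_le_sub_one_of_pos (div_pos hy hx)) hx.le
  rw [log_div hy.ne' hx.ne', mul_sub_one, mul_div_cancel₀ _ hx.ne'] at gibbs
  rw [negMulLog]
  linarith

section Shannon

variable {ι κ : Type*} [Fintype ι] [Fintype κ]

theorem sum_negMulLog_le_sum_negMulLog_mulVec [DecidableEq ι] {C : Matrix ι ι ℝ}
    (hC : C ∈ doublyStochastic ℝ ι) {p : ι → ℝ} (hp : ∀ i, 0 ≤ p i) :
    ∑ i, negMulLog (p i) ≤ ∑ i, negMulLog ((C *ᵥ p) i) := by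
  have jensen (i : ι) : ∑ j, C i j * negMulLog (p j) ≤ negMulLog ((C *ᵥ p) i) :=
    concaveOn_negMulLog.le_map_sum (fun j _ ↦ nonneg_of_mem_doublyStochastic hC)
      (sum_row_of_mem_doublyStochastic hC i) (fun j _ ↦ Set.mem_Ici.mpr (hp j))
  calc ∑ j, negMulLog (p j) = ∑ i, ∑ j, C i j * negMulLog (p j) := by
        rw [Finset.sum_comm]
        simp_rw [← Finset.sum_mul, sum_col_of_mem_doublyStochastic hC, one_mul]
    _ ≤ _ := Finset.sum_le_sum fun i _ ↦ jensen i

theorem sum_negMulLog_le_sum_negMulLog_marginals {d : ι × κ → ℝ} (hd : ∀ x, 0 ≤ d x)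
    (hd₁ : ∑ x, d x = 1) :
    ∑ x, negMulLog (d x) ≤
      ∑ i, negMulLog (∑ k, d (i, k)) + ∑ k, negMulLog (∑ i, d (i, k)) := by
  set a := fun i ↦ ∑ k, d (i, k)
  set b := fun k ↦ ∑ i, d (i, k)
  change ∑ x, negMulLog (d x) ≤ ∑ i, negMulLog (a i) + ∑ k, negMulLog (b k)
  have ha (x : ι × κ) : d x ≤ a x.1 :=
    Finset.single_le_sum (f := fun k ↦ d (x.1, k)) (fun k _ ↦ hd _) (Finset.mem_univ x.2)
  have hb (x : ι × κ) : d x ≤ b x.2 :=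
    Finset.single_le_sum (f := fun i ↦ d (i, x.2)) (fun i _ ↦ hd _) (Finset.mem_univ x.1)
  have pointwise (x : ι × κ) :
      negMulLog (d x) ≤ -d x * log (a x.1) - d x * log (b x.2) + a x.1 * b x.2 - d x := by
    rcases (hd x).eq_or_lt with h | h
    · rw [← h]
      simpa using mul_nonneg ((hd x).trans (ha x)) ((hd x).trans (hb x))
    have := negMulLog_le_neg_mul_log_add_sub (hd x)
      (mul_nonneg ((hd x).trans (ha x)) ((hd x).trans (hb x)))
      (fun _ ↦ mul_pos (h.trans_le (ha x)) (h.trans_le (hb x)))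
    rw [log_mul (h.trans_le (ha x)).ne' (h.trans_le (hb x)).ne'] at this
    linarith
  have ha₁ : ∑ i, a i = 1 := by rw [← hd₁, Fintype.sum_prod_type]
  have hb₁ : ∑ k, b k = 1 := by rw [← hd₁, Fintype.sum_prod_type_right]
  have ea : ∑ x : ι × κ, d x * log (a x.1) = ∑ i, a i * log (a i) := by
    simp_rw [Fintype.sum_prod_type, ← Finset.sum_mul]
    rfl
  have eb : ∑ x : ι × κ, d x * log (b x.2) = ∑ k, b k * log (b k) := by
    simp_rw [Fintype.sum_prod_type_right, ← Finset.sum_mul]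
    rfl
  have eab : ∑ x : ι × κ, a x.1 * b x.2 = 1 := by
    rw [Fintype.sum_prod_type, ← Finset.sum_mul_sum, ha₁, hb₁, one_mul]
  have := Finset.sum_le_sum fun x (_ : x ∈ Finset.univ) ↦ pointwise x
  simp only [Finset.sum_sub_distrib, Finset.sum_add_distrib, neg_mul, Finset.sum_neg_distrib,
    ea, eb, eab, hd₁] at this
  refine this.trans_eq ?_
  simp only [negMulLog, neg_mul, Finset.sum_neg_distrib]
  ring

end Shannon

namespace Matrix

variable {ι ι' : Type*} [Fintype ι] [DecidableEq ι]

theorem normSq_mem_doublyStochastic {U : Matrix ι ι ℂ} (hU : U ∈ unitary (Matrix ι ι ℂ)) :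
    (of fun i j ↦ Complex.normSq (U i j)) ∈ doublyStochastic ℝ ι := by
  refine mem_doublyStochastic_iff_sum.mpr
    ⟨fun i j ↦ Complex.normSq_nonneg _, fun i ↦ ?_, fun j ↦ ?_⟩
  · have h : U * star U = 1 := Unitary.mul_star_self_of_mem hU
    have := congr_fun₂ h i i
    simp only [mul_apply, star_apply, Complex.star_def, Complex.mul_conj, one_apply_eq] at this
    exact_mod_cast this
  · have h : star U * U = 1 := Unitary.star_mul_self_of_mem hU
    have := congr_fun₂ h j j
    simp only [mul_apply, star_apply, Complex.star_def, mul_comm (starRingEnd ℂ _),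
      Complex.mul_conj, one_apply_eq] at this
    exact_mod_cast this

theorem IsHermitian.re_diag_conjTranspose_mul_mul_eq_mulVec {A : Matrix ι ι ℂ} (hA : A.IsHermitian)
    (P : Matrix ι ι' ℂ) (x : ι') :
    ((Pᴴ * A * P) x x).re =
      ((of fun x α ↦ Complex.normSq ((Pᴴ * (hA.eigenvectorUnitary : Matrix ι ι ℂ)) x α)) *ᵥ
        hA.eigenvalues) x := by
  set M := Pᴴ * (hA.eigenvectorUnitary : Matrix ι ι ℂ)
  have hconj : Pᴴ * A * P = M * diagonal (RCLike.ofReal ∘ hA.eigenvalues : ι → ℂ) * Mᴴ := by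
    conv_lhs => rw [hA.spectral_theorem]
    simp only [M, Unitary.conjStarAlgAut_apply, conjTranspose_mul, star_eq_conjTranspose,
      conjTranspose_conjTranspose, Matrix.mul_assoc]
  rw [hconj, mulVec, dotProduct, mul_apply, Complex.re_sum]
  refine Finset.sum_congr rfl fun α _ ↦ ?_
  simp only [mul_diagonal, conjTranspose_apply, Function.comp_apply, of_apply, Complex.star_def]
  rw [mul_right_comm, Complex.mul_conj]
  simp

theorem IsHermitian.re_diag_conjTranspose_eigenvectorUnitary_mul_mul {A : Matrix ι ι ℂ}
    (hA : A.IsHermitian) (i : ι) :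
    (((hA.eigenvectorUnitary : Matrix ι ι ℂ)ᴴ * A * hA.eigenvectorUnitary) i i).re =
      hA.eigenvalues i := by
  have hdiag := hA.conjStarAlgAut_star_eigenvectorUnitary
  rw [Unitary.conjStarAlgAut_star_apply, star_eq_conjTranspose] at hdiag
  simp [hdiag]

end Matrix

theorem vNEntropy_of_isHermitian {ι : Type*} [Fintype ι] [DecidableEq ι] {A : Matrix ι ι ℂ}
    (hA : A.IsHermitian) : vNEntropy A = ∑ i, negMulLog (hA.eigenvalues i) := by
  simp [vNEntropy, hA, negMulLog, Finset.sum_neg_distrib]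

theorem Matrix.PosSemidef.vNEntropy_le_sum_negMulLog_diag {ι : Type*} [Fintype ι]
    [DecidableEq ι] {A : Matrix ι ι ℂ} (hA : A.PosSemidef) {P : Matrix ι ι ℂ}
    (hP : P ∈ unitary (Matrix ι ι ℂ)) :
    vNEntropy A ≤ ∑ x, negMulLog ((Pᴴ * A * P) x x).re := by
  have hM : Pᴴ * (hA.1.eigenvectorUnitary : Matrix ι ι ℂ) ∈ unitary (Matrix ι ι ℂ) :=
    mul_mem (Unitary.star_mem hP) hA.1.eigenvectorUnitary.2
  simp_rw [vNEntropy_of_isHermitian hA.1, hA.1.re_diag_conjTranspose_mul_mul_eq_mulVec]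
  exact sum_negMulLog_le_sum_negMulLog_mulVec (normSq_mem_doublyStochastic hM)
    hA.eigenvalues_nonneg

theorem vNEntropy_subadditive_general {m n : ℕ}
    (σ : Matrix (Fin m × Fin n) (Fin m × Fin n) ℂ) (hσ : σ.PosSemidef) (htr : σ.trace = 1) :
    vNEntropy σ ≤
      vNEntropy (Matrix.of fun i j => ∑ k, σ (i, k) (j, k))
        + vNEntropy (Matrix.of fun k l => ∑ i, σ (i, k) (i, l)) := by
  change vNEntropy σ ≤ vNEntropy σ.traceRight + vNEntropy σ.traceLeft
  have h₁ := hσ.1.traceRight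
  have h₂ := hσ.1.traceLeft
  have hV := h₁.eigenvectorUnitary.2
  have hW := h₂.eigenvectorUnitary.2
  set P : Matrix (Fin m × Fin n) (Fin m × Fin n) ℂ :=
    ↑h₁.eigenvectorUnitary ⊗ₖ ↑h₂.eigenvectorUnitary
  have hP : P ∈ unitary _ := kronecker_mem_unitary hV hW
  set d := fun x ↦ ((Pᴴ * σ * P) x x).re
  have hd_nonneg (x) : 0 ≤ d x :=
    (Complex.nonneg_iff.mp (hσ.conjTranspose_mul_mul_same P).diag_nonneg).1
  have hd_sum : ∑ x, d x = 1 := by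
    rw [← Complex.re_sum]
    change (Pᴴ * σ * P).trace.re = 1
    rw [trace_mul_cycle, ← star_eq_conjTranspose, Unitary.mul_star_self_of_mem hP, one_mul, htr,
      Complex.one_re]
  have hd₁ (i) : ∑ k, d (i, k) = h₁.eigenvalues i := by
    rw [← Complex.re_sum, ← h₁.re_diag_conjTranspose_eigenvectorUnitary_mul_mul,
      ← traceRight_conjTranspose_kronecker_mul_mul σ _ (Unitary.mul_star_self_of_mem hW)]
    rfl
  have hd₂ (k) : ∑ i, d (i, k) = h₂.eigenvalues k := by
    rw [← Complex.re_sum, ← h₂.re_diag_conjTranspose_eigenvectorUnitary_mul_mul,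
      ← traceLeft_conjTranspose_kronecker_mul_mul σ (Unitary.mul_star_self_of_mem hV)]
    rfl
  calc vNEntropy σ ≤ ∑ x, negMulLog (d x) := hσ.vNEntropy_le_sum_negMulLog_diag hP
    _ ≤ ∑ i, negMulLog (∑ k, d (i, k)) + ∑ k, negMulLog (∑ i, d (i, k)) :=
      sum_negMulLog_le_sum_negMulLog_marginals hd_nonneg hd_sum
    _ = vNEntropy σ.traceRight + vNEntropy σ.traceLeft := by
      simp_rw [hd₁, hd₂, vNEntropy_of_isHermitian h₁, vNEntropy_of_isHermitian h₂]

/-- Subadditivity of the von Neumann entropy: `H(σ) ≤ H(σ₁) + H(σ₂)` where `σ₁, σ₂` are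
the partial traces of the density matrix `σ` on `M_m ⊗ M_n`. -/
theorem vNEntropy_subadditive {m n : ℕ} (hm : 1 ≤ m) (hn : 1 ≤ n)
    (σ : Matrix (Fin m × Fin n) (Fin m × Fin n) ℂ) (hσ : σ.PosSemidef) (htr : σ.trace = 1) :
    vNEntropy σ ≤
      vNEntropy (Matrix.of fun i j => ∑ k, σ (i, k) (j, k))
        + vNEntropy (Matrix.of fun k l => ∑ i, σ (i, k) (i, l)) :=
  vNEntropy_subadditive_general σ hσ htr
end

section
/- For every n ≥ 1 there exists a density matrix σ indexed by Fin n × Fin n such that H(σ) = 0 and its first partial trace σ₁ equals (1/n)·I, so that H(σ₁) = log n; hence the bound H(σ₁) - H(σ) ≤ log n is attained (optimality of the index bound, realized by a maximally entangled pure state). -/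
open scoped ComplexOrder

/-! The maximally entangled vector `ψ = ∑ₖ |k⟩ ⊗ |k⟩` has `⟨ψ, ψ⟩ = n`, so
`σ = n⁻¹ |ψ⟩⟨ψ|` is a rank-one projection, hence has eigenvalues in `{0, 1}` and entropy `0`.
Tracing out the second factor of `|ψ⟩⟨ψ|` leaves the identity, so `σ₁ = n⁻¹ I`, whose `n`
eigenvalues all equal `n⁻¹`, giving `H(σ₁) = log n`. -/

open Matrix

section Entropy

variable {m : Type*} [Fintype m] [DecidableEq m]

theorem vNEntropy_eq_zero_of_isIdempotentElem {A : Matrix m m ℂ} (hA : A.IsHermitian)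
    (hidem : IsIdempotentElem A) : vNEntropy A = 0 := by
  rw [vNEntropy, dif_pos hA, neg_eq_zero]
  refine Finset.sum_eq_zero fun i _ => ?_
  rcases hidem.spectrum_subset ℝ (hA.eigenvalues_mem_spectrum_real i) with h | h <;>
    simp only [Set.mem_singleton_iff.mp h, Real.log_zero, Real.log_one, mul_zero]

theorem vNEntropy_ofReal_smul_one (c : ℝ) :
    vNEntropy ((c : ℂ) • (1 : Matrix m m ℂ)) = -(Fintype.card m * (c * Real.log c)) := by
  have hscalar : (c : ℂ) • (1 : Matrix m m ℂ) = algebraMap ℝ (Matrix m m ℂ) c := by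
    rw [Algebra.algebraMap_eq_smul_one, ← Complex.coe_smul]
  have hA : ((c : ℂ) • (1 : Matrix m m ℂ)).IsHermitian := by
    rw [hscalar]
    exact IsSelfAdjoint.algebraMap _ (.all c)
  have heig (i : m) : hA.eigenvalues i = c := by
    have : Nonempty m := ⟨i⟩
    simpa [hscalar, spectrum.scalar_eq] using hA.eigenvalues_mem_spectrum_real i
  rw [vNEntropy, dif_pos hA]
  simp [heig]

theorem vNEntropy_maximallyMixed [Nonempty m] :
    vNEntropy ((Fintype.card m : ℂ)⁻¹ • (1 : Matrix m m ℂ)) = Real.log (Fintype.card m) := by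
  have hcard : (Fintype.card m : ℝ) ≠ 0 := by positivity
  have := vNEntropy_ofReal_smul_one (m := m) (Fintype.card m : ℝ)⁻¹
  push_cast at this
  rw [this, Real.log_inv]
  field_simp

end Entropy

/-- Traces out the second tensor factor: `σ ↦ σ₁`. -/
def partialTraceRight {R m k : Type*} [AddCommMonoid R] [Fintype k]
    (σ : Matrix (m × k) (m × k) R) : Matrix m m R :=
  of fun i j => ∑ l, σ (i, l) (j, l)

section MaxEntangled

variable (m : Type*) [DecidableEq m]

def maxEntangledVector : m × m → ℂ := fun p => if p.1 = p.2 then 1 else 0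

theorem star_maxEntangledVector : star (maxEntangledVector m) = maxEntangledVector m := by
  ext p
  by_cases h : p.1 = p.2 <;> simp [maxEntangledVector, h]

variable [Fintype m]

noncomputable def maxEntangledState : Matrix (m × m) (m × m) ℂ :=
  (Fintype.card m : ℂ)⁻¹ • vecMulVec (maxEntangledVector m) (maxEntangledVector m)

theorem maxEntangledVector_dotProduct_self :
    maxEntangledVector m ⬝ᵥ maxEntangledVector m = Fintype.card m := by
  simp [dotProduct, maxEntangledVector, Fintype.sum_prod_type, Finset.sum_ite_eq]

theorem maxEntangledState_posSemidef : (maxEntangledState m).PosSemidef := by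
  refine .smul ?_ (by positivity)
  simpa [star_maxEntangledVector] using posSemidef_vecMulVec_self_star (maxEntangledVector m)

theorem partialTraceRight_maxEntangledState :
    partialTraceRight (maxEntangledState m) = (Fintype.card m : ℂ)⁻¹ • 1 := by
  ext i j
  by_cases h : i = j <;>
    simp [partialTraceRight, maxEntangledState, vecMulVec_apply, maxEntangledVector, h, one_apply]

variable [Nonempty m]

theorem trace_maxEntangledState : (maxEntangledState m).trace = 1 := by
  simp [maxEntangledState, trace_vecMulVec, maxEntangledVector_dotProduct_self]

theorem maxEntangledState_isIdempotentElem : IsIdempotentElem (maxEntangledState m) := by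
  simp [IsIdempotentElem, maxEntangledState, vecMulVec_mul_vecMulVec,
    maxEntangledVector_dotProduct_self, smul_smul]

theorem vNEntropy_maxEntangledState : vNEntropy (maxEntangledState m) = 0 :=
  vNEntropy_eq_zero_of_isIdempotentElem (maxEntangledState_posSemidef m).isHermitian
    (maxEntangledState_isIdempotentElem m)

end MaxEntangled

/-- Optimality of the bound `H(σ₁) - H(σ) ≤ log n`: there is a (maximally entangled, pure)
density matrix `σ` on `M_n ⊗ M_n` with `H(σ) = 0` whose first partial trace is the
normalized identity `(1/n) I`, of entropy `log n`. -/
theorem vNEntropy_bound_optimal (n : ℕ) (hn : 1 ≤ n) :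
    ∃ σ : Matrix (Fin n × Fin n) (Fin n × Fin n) ℂ,
      σ.PosSemidef ∧ σ.trace = 1 ∧ vNEntropy σ = 0 ∧
      (Matrix.of fun i j => ∑ k, σ (i, k) (j, k))
        = ((n : ℂ)⁻¹) • (1 : Matrix (Fin n) (Fin n) ℂ) ∧
      vNEntropy (Matrix.of fun i j => ∑ k, σ (i, k) (j, k)) = Real.log n := by
  have : Nonempty (Fin n) := ⟨⟨0, hn⟩⟩
  have hσ₁ := partialTraceRight_maxEntangledState (Fin n)
  have hH₁ := vNEntropy_maximallyMixed (m := Fin n)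
  rw [Fintype.card_fin] at hσ₁ hH₁
  refine ⟨maxEntangledState (Fin n), maxEntangledState_posSemidef _, trace_maxEntangledState _,
    vNEntropy_maxEntangledState _, hσ₁, ?_⟩
  rw [← hσ₁] at hH₁
  exact hH₁
end
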